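/- Let S ⊆ {(i,j) : 1 ≤ i < j ≤ n} with ℓ_i = (n−i) + d_i − e_i defined as usual from S. If K(S) = n (equivalently {ℓ₁,…,ℓₙ} = {0,1,…,n−1}), then there exists a permutation w ∈ 𝔖ₙ such that S = R(w), where R(w) = {(w(j),w(i)) : i < j, w(i) > w(j)}. Conversely, for any w ∈ 𝔖ₙ, the set S = R(w) satisfies ℓ_{w(j)} = n − j for every j, and hence K(S) = n. -/
import Mathlib


open Finset

/-- The column sums `d_j = #{i : (i,j) ∈ S}`. -/
def dS {n : ℕ} (S : Finset (Fin n × Fin n)) (j : Fin n) : ℕ :=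
  (S.filter (fun p => p.2 = j)).card

/-- The row sums `e_i = #{j : (i,j) ∈ S}`. -/
def eS {n : ℕ} (S : Finset (Fin n × Fin n)) (i : Fin n) : ℕ :=
  (S.filter (fun p => p.1 = i)).card

/-- `ℓ_i = (n − i) + d_i − e_i` (0-indexed: `n − 1 − i` in place of `n − i`). -/
def ellS {n : ℕ} (S : Finset (Fin n × Fin n)) (i : Fin n) : ℤ :=
  ((n : ℤ) - 1 - (i : ℤ)) + (dS S i : ℤ) - (eS S i : ℤ)

/-- `R(w) = {(w(j),w(i)) : i < j, w(i) > w(j)}`, the inversion set of `w⁻¹`. -/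
def Rset {n : ℕ} (w : Equiv.Perm (Fin n)) : Finset (Fin n × Fin n) :=
  Finset.univ.filter (fun p => p.1 < p.2 ∧ w.symm p.2 < w.symm p.1)

namespace EllAux

variable {n : ℕ}

lemma dS_eq (S : Finset (Fin n × Fin n)) (i : Fin n) :
    dS S i = (univ.filter fun a => (a, i) ∈ S).card := by
  have hinj : Function.Injective (fun a : Fin n => (a, i)) := fun a b h => by
    simpa using congrArg Prod.fst h
  rw [dS, ← Finset.card_image_of_injective (univ.filter fun a => (a, i) ∈ S) hinj]
  congr 1
  ext ⟨x, y⟩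
  simp only [mem_filter, mem_image, mem_univ, true_and, Prod.mk.injEq]
  constructor
  · rintro ⟨h, rfl⟩; exact ⟨x, h, rfl, rfl⟩
  · rintro ⟨a, ha, rfl, rfl⟩; exact ⟨ha, rfl⟩

lemma eS_eq (S : Finset (Fin n × Fin n)) (i : Fin n) :
    eS S i = (univ.filter fun b => (i, b) ∈ S).card := by
  have hinj : Function.Injective (fun b : Fin n => (i, b)) := fun a b h => by
    simpa using congrArg Prod.snd h
  rw [eS, ← Finset.card_image_of_injective (univ.filter fun b => (i, b) ∈ S) hinj]
  congr 1
  ext ⟨x, y⟩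
  simp only [mem_filter, mem_image, mem_univ, true_and, Prod.mk.injEq]
  constructor
  · rintro ⟨h, rfl⟩; exact ⟨y, h, rfl, rfl⟩
  · rintro ⟨a, ha, rfl, rfl⟩; exact ⟨ha, rfl⟩

lemma card_gt (i : Fin n) : (univ.filter fun x => i < x).card = n - 1 - (i : ℕ) := by
  rw [show (univ.filter fun x => i < x) = Ioi i from by ext; simp, Fin.card_Ioi]

lemma part2 (w : Equiv.Perm (Fin n)) (j : Fin n) :
    ellS (Rset w) (w j) = (n : ℤ) - 1 - (j : ℤ) := by
  set i := w j with hi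
  have hsymm : w.symm i = j := by simp [hi]
  have hd : dS (Rset w) i = (univ.filter fun x => x < i ∧ j < w.symm x).card := by
    rw [dS_eq]; congr 1; ext x; simp [Rset, hsymm]
  have he : eS (Rset w) i = (univ.filter fun x => i < x ∧ w.symm x < j).card := by
    rw [eS_eq]; congr 1; ext x; simp [Rset, hsymm]
  have key1 : (univ.filter fun x => i < x ∧ w.symm x < j).card
      + (univ.filter fun x => i < x ∧ j < w.symm x).card
      = (univ.filter fun x : Fin n => i < x).card := by
    rw [← Finset.filter_filter, ← Finset.filter_filter]
    rw [show (Finset.filter (fun x => j < w.symm x) (univ.filter fun x : Fin n => i < x))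
        = Finset.filter (fun x => ¬ w.symm x < j) (univ.filter fun x : Fin n => i < x) from ?_]
    · exact Finset.card_filter_add_card_filter_not (fun x => w.symm x < j)
    · apply Finset.filter_congr
      intro x hx
      simp only [mem_filter, mem_univ, true_and] at hx
      have hxj : w.symm x ≠ j := by
        intro h; apply absurd hx; rw [show x = i from by rw [← hsymm] at h; exact w.symm.injective h]; exact lt_irrefl _
      constructor
      · intro h; exact not_lt.mpr (le_of_lt h)
      · intro h; exact lt_of_le_of_ne (not_lt.mp h) (Ne.symm hxj)
  have key2 : (univ.filter fun x => x < i ∧ j < w.symm x).card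
      + (univ.filter fun x => i < x ∧ j < w.symm x).card
      = (univ.filter fun x : Fin n => j < w.symm x).card := by
    have e1 : (univ.filter fun x => x < i ∧ j < w.symm x)
        = Finset.filter (fun x => x < i) (univ.filter fun x : Fin n => j < w.symm x) := by
      rw [Finset.filter_filter]; congr 1; ext x; exact and_comm
    have e2 : (univ.filter fun x => i < x ∧ j < w.symm x)
        = Finset.filter (fun x => ¬ x < i) (univ.filter fun x : Fin n => j < w.symm x) := by
      rw [Finset.filter_filter]
      apply Finset.filter_congr
      intro x _
      constructor
      · rintro ⟨h1, h2⟩; exact ⟨h2, not_lt.mpr (le_of_lt h1)⟩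
      · rintro ⟨h2, h1⟩
        refine ⟨lt_of_le_of_ne (not_lt.mp h1) ?_, h2⟩
        intro h; apply absurd h2; rw [← h, hsymm]; exact lt_irrefl _
    rw [e1, e2]
    exact Finset.card_filter_add_card_filter_not (fun x => x < i)
  have key3 : (univ.filter fun x : Fin n => j < w.symm x).card
      = (univ.filter fun y : Fin n => j < y).card := by
    apply Finset.card_bij (fun x _ => w.symm x)
    · intro x hx; simp only [mem_filter, mem_univ, true_and] at *; exact hx
    · intro x _ y _ h; exact w.symm.injective h
    · intro y hy; simp only [mem_filter, mem_univ, true_and] at *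
      exact ⟨w y, by simpa using hy, by simp⟩
  have ci := card_gt i
  have cj := card_gt j
  have hi' := i.isLt
  have hj' := j.isLt
  rw [ellS, hd, he]
  omega

lemma part1 : ∀ n (S : Finset (Fin n × Fin n)), (∀ p ∈ S, p.1 < p.2) →
    (∀ j : ℕ, j < n → (univ.filter fun i => ellS S i = (j : ℤ)).card = 1) →
    ∃ w : Equiv.Perm (Fin n), S = Rset w := by
  intro n
  induction n with
  | zero => intro S _ _; exact ⟨1, by ext p; exact p.1.elim0⟩
  | succ n ih =>
    intro S hS hK
    obtain ⟨i₀, hi₀⟩ : ∃ i₀, univ.filter (fun i => ellS S i = (n : ℤ)) = {i₀} :=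
      Finset.card_eq_one.mp (hK n (by omega))
    have hℓ : ellS S i₀ = (n : ℤ) := by
      have h := Finset.mem_singleton_self i₀
      rw [← hi₀, mem_filter] at h
      exact h.2
    -- column of i₀ is full, row of i₀ is empty
    have hAB : (univ.filter fun a => (a, i₀) ∈ S) ⊆ (univ.filter fun a : Fin (n+1) => a < i₀) := by
      intro a ha
      simp only [mem_filter, mem_univ, true_and] at *
      exact hS _ ha
    have hBcard : (univ.filter fun a : Fin (n+1) => a < i₀).card = (i₀ : ℕ) := by
      rw [show (univ.filter fun a : Fin (n+1) => a < i₀) = Iio i₀ from by ext; simp, Fin.card_Iio]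
    have hdle : dS S i₀ ≤ (i₀ : ℕ) := by
      rw [dS_eq, ← hBcard]; exact Finset.card_le_card hAB
    have hi0lt := i₀.isLt
    have hde : dS S i₀ = eS S i₀ + (i₀ : ℕ) := by
      rw [ellS] at hℓ; push_cast at hℓ; omega
    have he0 : eS S i₀ = 0 := by omega
    have hd0 : dS S i₀ = (i₀ : ℕ) := by omega
    have hrow : ∀ b, (i₀, b) ∉ S := by
      intro b hb
      rw [eS_eq] at he0
      have := Finset.card_eq_zero.mp he0
      have hb' : b ∈ (univ.filter fun b => (i₀, b) ∈ S) := by simp [hb]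
      rw [this] at hb'
      exact absurd hb' (Finset.notMem_empty b)
    have hcol : ∀ a, a < i₀ → (a, i₀) ∈ S := by
      have heq : (univ.filter fun a => (a, i₀) ∈ S) = (univ.filter fun a : Fin (n+1) => a < i₀) :=
        Finset.eq_of_subset_of_card_le hAB (by rw [hBcard, ← dS_eq S i₀, hd0])
      intro a ha
      have : a ∈ (univ.filter fun a : Fin (n+1) => a < i₀) := by simp [ha]
      rw [← heq, mem_filter] at this
      exact this.2
    have hcoliff : ∀ a : Fin (n+1), ((a, i₀) ∈ S ↔ a < i₀) :=
      fun a => ⟨fun h => hS _ h, hcol a⟩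
    set f : Fin n → Fin (n+1) := i₀.succAbove with hf
    have hfinj : Function.Injective f := i₀.succAbove_right_injective
    have hfne : ∀ a, f a ≠ i₀ := fun a => Fin.succAbove_ne i₀ a
    have hflt : ∀ a b, f a < f b ↔ a < b := fun a b => Fin.succAbove_lt_succAbove_iff
    have hfval : ∀ i : Fin n, (f i : ℕ) = if (i : ℕ) < (i₀ : ℕ) then (i : ℕ) else (i : ℕ) + 1 := by
      intro i
      rw [hf, Fin.succAbove]
      split
      · next h => simp only [Fin.coe_castSucc]; rw [if_pos]; exact h
      · next h => simp only [Fin.val_succ]; rw [if_neg]; exact fun hc => h (by simpa [Fin.lt_def] using hc)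
    have hfltiff : ∀ i : Fin n, (f i < i₀ ↔ (i : ℕ) < (i₀ : ℕ)) := by
      intro i
      rw [Fin.lt_def, hfval i]
      split <;> omega
    set S' : Finset (Fin n × Fin n) := univ.filter fun p => (f p.1, f p.2) ∈ S with hS'def
    have hmemS' : ∀ p : Fin n × Fin n, p ∈ S' ↔ (f p.1, f p.2) ∈ S := by
      intro p; simp [hS'def]
    have hS'tri : ∀ p ∈ S', p.1 < p.2 := by
      intro p hp
      rw [hmemS'] at hp
      exact (hflt _ _).mp (hS _ hp)
    have hd' : ∀ i, dS S' i = dS S (f i) := by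
      intro i
      rw [dS_eq, dS_eq]
      apply Finset.card_bij (fun a _ => f a)
      · intro a ha
        simp only [mem_filter, mem_univ, true_and] at *
        rw [hmemS'] at ha
        exact ha
      · intro a _ b _ h; exact hfinj h
      · intro b hb
        simp only [mem_filter, mem_univ, true_and] at hb
        have hbne : b ≠ i₀ := fun h => hrow (f i) (by rw [← h]; exact hb)
        obtain ⟨a, rfl⟩ := Fin.exists_succAbove_eq hbne
        exact ⟨a, by simp only [mem_filter, mem_univ, true_and]; rw [hmemS']; exact hb, rfl⟩
    have he' : ∀ i, eS S (f i) = eS S' i + (if f i < i₀ then 1 else 0) := by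
      intro i
      rw [eS_eq, eS_eq]
      have hsplit := Finset.card_filter_add_card_filter_not
        (s := univ.filter fun b => (f i, b) ∈ S) (p := fun b => b ≠ i₀)
      have h1 : (univ.filter fun b => (i, b) ∈ S').card
          = ((univ.filter fun b => (f i, b) ∈ S).filter fun b => b ≠ i₀).card := by
        apply Finset.card_bij (fun b _ => f b)
        · intro b hb
          simp only [mem_filter, mem_univ, true_and] at *
          rw [hmemS'] at hb
          exact ⟨hb, hfne b⟩
        · intro a _ b _ h; exact hfinj h
        · intro b hb
          simp only [mem_filter, mem_univ, true_and] at hb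
          obtain ⟨b', rfl⟩ := Fin.exists_succAbove_eq hb.2
          refine ⟨b', ?_, rfl⟩
          simp only [mem_filter, mem_univ, true_and]
          rw [hmemS']
          exact hb.1
      have h2 : (((univ.filter fun b => (f i, b) ∈ S)).filter fun b => ¬ b ≠ i₀).card
          = (if f i < i₀ then 1 else 0) := by
        have : ((univ.filter fun b => (f i, b) ∈ S).filter fun b => ¬ b ≠ i₀)
            = (if f i < i₀ then {i₀} else ∅) := by
          ext b
          simp only [mem_filter, mem_univ, true_and, not_not]
          constructor
          · rintro ⟨hb, rfl⟩
            rw [if_pos ((hcoliff (f i)).mp hb)]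
            exact Finset.mem_singleton_self b
          · intro hb
            by_cases h : f i < i₀
            · rw [if_pos h, Finset.mem_singleton] at hb
              subst hb
              exact ⟨(hcoliff (f i)).mpr h, rfl⟩
            · rw [if_neg h] at hb
              exact absurd hb (Finset.notMem_empty b)
        rw [this]
        split <;> simp
      omega
    have hell : ∀ i, ellS S' i = ellS S (f i) := by
      intro i
      rw [ellS, ellS, hd' i, he' i]
      have h1 := hfval i
      have h2 := hfltiff i
      have h3 := i.isLt
      by_cases hc : (i : ℕ) < (i₀ : ℕ)
      · rw [if_pos (h2.mpr hc)]
        have h4 : ((f i : Fin (n+1)) : ℕ) = (i : ℕ) := by rw [h1, if_pos hc]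
        push_cast
        omega
      · rw [if_neg (fun hh => hc (h2.mp hh))]
        have h4 : ((f i : Fin (n+1)) : ℕ) = (i : ℕ) + 1 := by rw [h1, if_neg hc]
        push_cast
        omega
    have hK' : ∀ j : ℕ, j < n → (univ.filter fun i => ellS S' i = (j : ℤ)).card = 1 := by
      intro j hj
      rw [← hK j (by omega)]
      apply Finset.card_bij (fun i _ => f i)
      · intro a ha
        simp only [mem_filter, mem_univ, true_and] at *
        rw [← hell a]
        exact ha
      · intro a _ b _ h; exact hfinj h
      · intro b hb
        simp only [mem_filter, mem_univ, true_and] at hb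
        have hbne : b ≠ i₀ := by
          intro h
          rw [h, hℓ] at hb
          have : (j : ℤ) < (n : ℤ) := by exact_mod_cast hj
          omega
        obtain ⟨a, rfl⟩ := Fin.exists_succAbove_eq hbne
        exact ⟨a, by simp only [mem_filter, mem_univ, true_and]; rw [hell a]; exact hb, rfl⟩
    obtain ⟨w', hw'⟩ := ih S' hS'tri hK'
    refine ⟨(finSuccEquiv n).trans ((w'.optionCongr).trans (finSuccEquiv' i₀).symm), ?_⟩
    set w : Equiv.Perm (Fin (n+1)) :=
      (finSuccEquiv n).trans ((w'.optionCongr).trans (finSuccEquiv' i₀).symm) with hwdef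
    have hw0 : w.symm i₀ = 0 := by
      simp [hwdef, Equiv.symm_apply_eq, finSuccEquiv_symm_none]
    have hws : ∀ b : Fin n, w.symm (f b) = (w'.symm b).succ := by
      intro b
      simp [hwdef, hf, Equiv.symm_apply_eq, finSuccEquiv_symm_some]
    ext ⟨a, b⟩
    simp only [Rset, mem_filter, mem_univ, true_and]
    by_cases ha : a = i₀
    · subst ha
      constructor
      · intro h; exact absurd h (hrow b)
      · rintro ⟨-, h2⟩
        rw [hw0] at h2
        exact absurd h2 (Fin.not_lt_zero _)
    · obtain ⟨a', rfl⟩ := Fin.exists_succAbove_eq ha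
      by_cases hb : b = i₀
      · subst hb
        rw [hw0, hws a']
        constructor
        · intro h; exact ⟨hS _ h, Fin.succ_pos _⟩
        · rintro ⟨h1, -⟩; exact hcol _ h1
      · obtain ⟨b', rfl⟩ := Fin.exists_succAbove_eq hb
        rw [hws a', hws b']
        have : ((i₀.succAbove a', i₀.succAbove b') ∈ S) ↔ (a', b') ∈ S' := (hmemS' (a', b')).symm
        rw [this, hw', Rset, mem_filter]
        simp only [mem_univ, true_and]
        rw [hflt a' b', Fin.succ_lt_succ_iff]
end EllAux

/-- Lemma 3.3: if `K(S) = n`, i.e. every value `0,…,n−1` is attained exactly once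
among the `ℓ_i`, then `S = R(w)` for some permutation `w`; conversely, for any
`w` the set `S = R(w)` satisfies `ℓ_{w(j)} = n − j` for all `j` (0-indexed:
`n − 1 − j`), hence `K(S) = n`. -/
theorem ell_bijection (n : ℕ) (hn : 1 ≤ n) :
    (∀ S : Finset (Fin n × Fin n), (∀ p ∈ S, p.1 < p.2) →
      (∀ j : ℕ, j < n →
        (Finset.univ.filter (fun i => ellS S i = (j : ℤ))).card = 1) →
      ∃ w : Equiv.Perm (Fin n), S = Rset w)
    ∧ (∀ (w : Equiv.Perm (Fin n)) (j : Fin n),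
        ellS (Rset w) (w j) = (n : ℤ) - 1 - (j : ℤ)) := by
  exact ⟨EllAux.part1 n, fun w j => EllAux.part2 w j⟩
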